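/- In the one-way asynchronous cellular automaton non-universality construction, the constructed update schedule is fair (every cell is updated infinitely often), and after each full iteration of its three phases the states at positions l, ..., r−1 are restored to the fixed values x_l, ..., x_{r−1}. -/
import Mathlib


open scoped Classical

/-- Asynchronous update of a one-way CA (neighborhood `(-1, 0)`) on an update set `D`. -/
noncomputable def owStep {S : Type*} (f : S → S → S) (D : Set ℤ) (c : ℤ → S) :
    ℤ → S :=
  fun i => if i ∈ D then f (c (i - 1)) (c i) else c i

/-- Trajectory under an update schedule `ζ`. -/
noncomputable def owTraj {S : Type*} (f : S → S → S) (ζ : ℕ → Set ℤ) (c0 : ℤ → S) :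
    ℕ → ℤ → S
  | 0 => c0
  | t + 1 => owStep f (ζ t) (owTraj f ζ c0 t)

lemma owStep_of_not_mem {S : Type*} (f : S → S → S) {D : Set ℤ} (c : ℤ → S) {i : ℤ}
    (h : i ∉ D) : owStep f D c i = c i := if_neg h

lemma owStep_iterate_of_not_mem {S : Type*} (f : S → S → S) {D : Set ℤ} (c : ℤ → S) {i : ℤ}
    (h : i ∉ D) (d : ℕ) : (owStep f D)^[d] c i = c i := by
  induction d with
  | zero => rfl
  | succ d ih => rw [Function.iterate_succ_apply', owStep_of_not_mem f _ h, ih]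

lemma owStep_agree_iic {S : Type*} (f : S → S → S) (l : ℤ) {c c' : ℤ → S}
    (h : ∀ i ≤ l, c i = c' i) :
    ∀ i ≤ l, owStep f {i | i ≤ l} c i = owStep f {i | i ≤ l} c' i := by
  intro i hi
  simp only [owStep, Set.mem_setOf_eq, if_pos hi]
  rw [h i hi, h (i-1) (by omega)]

lemma owStep_iterate_agree_iic {S : Type*} (f : S → S → S) (l : ℤ) {c c' : ℤ → S}
    (h : ∀ i ≤ l, c i = c' i) (d : ℕ) :
    ∀ i ≤ l, (owStep f {i | i ≤ l})^[d] c i = (owStep f {i | i ≤ l})^[d] c' i := by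
  induction d with
  | zero => exact h
  | succ d ih =>
      intro i hi
      rw [Function.iterate_succ_apply', Function.iterate_succ_apply']
      exact owStep_agree_iic f l ih i hi

lemma owStep_singleton_ne {S : Type*} (f : S → S → S) (j : ℤ) (c : ℤ → S) (d : ℕ)
    {i : ℤ} (h : i ≠ j) : (owStep f {j})^[d] c i = c i :=
  owStep_iterate_of_not_mem f c (by simpa using h) d

lemma owStep_singleton_iter {S : Type*} (f : S → S → S) (j : ℤ) (c : ℤ → S) (d : ℕ) :
    (owStep f {j})^[d] c j = (fun s => f (c (j - 1)) s)^[d] (c j) := by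
  induction d with
  | zero => rfl
  | succ d ih =>
      rw [Function.iterate_succ_apply', Function.iterate_succ_apply']
      have hne : j - 1 ≠ j := by omega
      simp only [owStep, Set.mem_singleton_iff, if_pos rfl]
      rw [owStep_singleton_ne f j c d hne, ih]
      simp

def blockStart (Len : ℕ → ℕ) : ℕ → ℕ
  | 0 => 0
  | s + 1 => blockStart Len s + Len s

lemma blockStart_strictMono {Len : ℕ → ℕ} (h : ∀ s, 1 ≤ Len s) :
    StrictMono (blockStart Len) :=
  strictMono_nat_of_lt_succ fun s => by have := h s; simp only [blockStart]; omega

lemma self_le_blockStart {Len : ℕ → ℕ} (h : ∀ s, 1 ≤ Len s) (s : ℕ) :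
    s ≤ blockStart Len s := by
  induction s with
  | zero => simp [blockStart]
  | succ s ih => have := h s; simp only [blockStart]; omega

noncomputable def segIdx (Len : ℕ → ℕ) (t : ℕ) : ℕ :=
  Nat.findGreatest (fun s => blockStart Len s ≤ t) t

lemma segIdx_eq {Len : ℕ → ℕ} (h : ∀ s, 1 ≤ Len s) {s t : ℕ}
    (h1 : blockStart Len s ≤ t) (h2 : t < blockStart Len (s + 1)) : segIdx Len t = s := by
  have hs_le : s ≤ t := le_trans (self_le_blockStart h s) h1
  have hge : s ≤ segIdx Len t := Nat.le_findGreatest hs_le h1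
  have hspec : blockStart Len (segIdx Len t) ≤ t :=
    Nat.findGreatest_spec (P := fun s' => blockStart Len s' ≤ t) hs_le h1
  by_contra hne
  have hlt : s + 1 ≤ segIdx Len t := by omega
  have := (blockStart_strictMono h).monotone hlt
  omega

lemma owTraj_block {S : Type*} (f : S → S → S) (c0 : ℤ → S) (A : ℕ → Set ℤ)
    {Len : ℕ → ℕ} (h : ∀ s, 1 ≤ Len s) (s : ℕ) :
    owTraj f (fun t => A (segIdx Len t)) c0 (blockStart Len (s + 1)) =
      (owStep f (A s))^[Len s]
        (owTraj f (fun t => A (segIdx Len t)) c0 (blockStart Len s)) := by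
  have key : ∀ d, d ≤ Len s →
      owTraj f (fun t => A (segIdx Len t)) c0 (blockStart Len s + d) =
        (owStep f (A s))^[d]
          (owTraj f (fun t => A (segIdx Len t)) c0 (blockStart Len s)) := by
    intro d
    induction d with
    | zero => intro _; rfl
    | succ d ih =>
        intro hd
        have hlt : blockStart Len s + d < blockStart Len (s + 1) := by
          simp only [blockStart]; omega
        have hseg : segIdx Len (blockStart Len s + d) = s :=
          segIdx_eq h (Nat.le_add_right _ _) hlt
        have he : blockStart Len s + (d + 1) = (blockStart Len s + d) + 1 := by omega
        rw [he]
        show owStep f (A (segIdx Len (blockStart Len s + d)))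
            (owTraj f (fun t => A (segIdx Len t)) c0 (blockStart Len s + d)) = _
        rw [hseg, ih (by omega), Function.iterate_succ_apply']
  have hB : blockStart Len (s + 1) = blockStart Len s + Len s := rfl
  rw [hB]; exact key _ le_rfl

lemma md (n m q : ℕ) (hq : q < n + 2) :
    (m * (n + 2) + q) % (n + 2) = q ∧ (m * (n + 2) + q) / (n + 2) = m := by
  constructor
  · rw [mul_comm, Nat.mul_add_mod]; exact Nat.mod_eq_of_lt hq
  · rw [mul_comm, Nat.mul_add_div (by omega)]
    simp [Nat.div_eq_of_lt hq]

/-- In the one-way ACA non-universality construction, the constructed update schedule is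
fair, and after each full round the cells `l, ..., r-1` hold the pseudo-fixed-point
values `x_l, ..., x_{r-1}`: there is a fair schedule and infinitely many round times at
which the states at positions `l..r-1` equal `x`. -/
theorem oneway_schedule_fair_and_restores {S : Type*} [Finite S]
    (f : S → S → S) (c0 : ℤ → S) (l r : ℤ) (hlr : l < r)
    (ρL ρR : ℤ) (hρL : 0 < ρL) (hρR : 0 < ρR)
    (hperL : ∀ i ≤ l, c0 (i - ρL) = c0 i)
    (hperR : ∀ i ≥ r, c0 (i + ρR) = c0 i)
    (x : ℤ → S)
    (hxl : {k : ℕ | (owStep f {i | i ≤ l})^[k] c0 l = x l}.Infinite)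
    (hx : ∀ j : ℤ, l < j → j < r →
      {k : ℕ | (fun s => f (x (j - 1)) s)^[k] (c0 j) = x j}.Infinite) :
    ∃ ζ : ℕ → Set ℤ, (∀ i : ℤ, {t | i ∈ ζ t}.Infinite) ∧
      ∃ T : ℕ → ℕ, StrictMono T ∧
        ∀ m : ℕ, ∀ j : ℤ, l ≤ j → j < r → owTraj f ζ c0 (T m) j = x j := by
  classical
  obtain ⟨n, hn⟩ : ∃ n : ℕ, r = l + 1 + (n : ℤ) := by
    refine ⟨(r - 1 - l).toNat, ?_⟩
    have h := Int.toNat_of_nonneg (show (0:ℤ) ≤ r - 1 - l by omega)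
    omega
  -- phase-1 cumulative counts
  obtain ⟨F, hFmem, hFlt⟩ : ∃ F : ℕ → ℕ,
      (∀ a, (owStep f {i | i ≤ l})^[F a] c0 l = x l) ∧ ∀ a, a < F a := by
    choose F h1 h2 using fun a => hxl.exists_gt a
    exact ⟨F, fun a => h1 a, h2⟩
  set K : ℕ → ℕ := fun m => F^[m + 1] 0 with hKdef
  have hKmem : ∀ m, (owStep f {i | i ≤ l})^[K m] c0 l = x l := by
    intro m
    have h : K m = F (F^[m] 0) := Function.iterate_succ_apply' F m 0
    rw [h]; exact hFmem _
  have hKlt : ∀ m, K m < K (m + 1) := by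
    intro m
    have h : K (m + 1) = F (K m) := by
      show F^[m + 2] 0 = F (F^[m + 1] 0)
      exact Function.iterate_succ_apply' F (m + 1) 0
    rw [h]; exact hFlt _
  have hK0 : 1 ≤ K 0 := by
    have h : K 0 = F 0 := rfl
    rw [h]; exact hFlt 0
  -- phase-2 iteration counts
  have hkpex : ∀ jj : ℕ, ∃ kp : ℕ × ℕ, 1 ≤ jj → jj ≤ n →
      1 ≤ kp.1 ∧ 1 ≤ kp.2 ∧
      (fun y => f (x (l + (jj : ℤ) - 1)) y)^[kp.1] (c0 (l + (jj : ℤ))) = x (l + (jj : ℤ)) ∧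
      (fun y => f (x (l + (jj : ℤ) - 1)) y)^[kp.2] (x (l + (jj : ℤ))) = x (l + (jj : ℤ)) := by
    intro jj
    by_cases hjj : 1 ≤ jj ∧ jj ≤ n
    · have hj1 : l < l + (jj : ℤ) := by
        have : (1:ℤ) ≤ (jj:ℤ) := by exact_mod_cast hjj.1
        omega
      have hj2 : l + (jj : ℤ) < r := by
        have : (jj:ℤ) ≤ (n:ℤ) := by exact_mod_cast hjj.2
        omega
      have hinf := hx (l + (jj : ℤ)) hj1 hj2
      obtain ⟨k1, hk1, hk1pos⟩ := hinf.exists_gt 0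
      obtain ⟨k2, hk2, hk12⟩ := hinf.exists_gt k1
      refine ⟨(k1, k2 - k1), fun _ _ => ⟨hk1pos, by omega, hk1, ?_⟩⟩
      have h' : (fun y => f (x (l + (jj : ℤ) - 1)) y)^[(k2 - k1) + k1] (c0 (l + (jj : ℤ)))
          = x (l + (jj : ℤ)) := by
        rw [show k2 - k1 + k1 = k2 from by omega]
        exact hk2
      rwa [Function.iterate_add_apply, hk1] at h'
    · exact ⟨(1, 1), fun h1 h2 => absurd ⟨h1, h2⟩ hjj⟩
  choose kp hkp using hkpex
  -- the schedule data
  set Len : ℕ → ℕ := fun s =>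
    if s % (n + 2) = 0 then (if s / (n + 2) = 0 then K 0 else K (s / (n + 2)) - K (s / (n + 2) - 1))
    else if s % (n + 2) ≤ n then (if s / (n + 2) = 0 then (kp (s % (n + 2))).1 else (kp (s % (n + 2))).2)
    else 1 with hLdef
  set A : ℕ → Set ℤ := fun s =>
    if s % (n + 2) = 0 then {i | i ≤ l}
    else if s % (n + 2) ≤ n then {(l + ((s % (n + 2) : ℕ)) : ℤ)} else {i | r ≤ i} with hAdef
  have hLpos : ∀ s, 1 ≤ Len s := by
    intro s
    simp only [hLdef]
    by_cases h1 : s % (n + 2) = 0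
    · rw [if_pos h1]
      by_cases h2 : s / (n + 2) = 0
      · rw [if_pos h2]; exact hK0
      · rw [if_neg h2]
        have h3 := hKlt (s / (n + 2) - 1)
        have h4 : ∀ dd : ℕ, dd ≠ 0 → dd - 1 + 1 = dd := fun dd h => by omega
        rw [h4 _ h2] at h3
        omega
    · rw [if_neg h1]
      by_cases h2 : s % (n + 2) ≤ n
      · rw [if_pos h2]
        have h4 := hkp (s % (n + 2)) (by omega) h2
        by_cases h3 : s / (n + 2) = 0
        · rw [if_pos h3]; exact h4.1
        · rw [if_neg h3]; exact h4.2.1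
      · rw [if_neg h2]
  set ζ : ℕ → Set ℤ := fun t => A (segIdx Len t) with hζdef
  have hcs : ∀ s, owTraj f ζ c0 (blockStart Len (s + 1)) =
      (owStep f (A s))^[Len s] (owTraj f ζ c0 (blockStart Len s)) := by
    have h := owTraj_block f c0 A hLpos
    rw [← hζdef] at h
    exact h
  -- the main invariant
  have inv : ∀ s : ℕ,
      (∀ i ≤ l, owTraj f ζ c0 (blockStart Len s) i =
        (owStep f {i | i ≤ l})^[if s % (n + 2) = 0 then
          (if s / (n + 2) = 0 then 0 else K (s / (n + 2) - 1)) else K (s / (n + 2))] c0 i) ∧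
      (∀ jj : ℕ, 1 ≤ jj → jj ≤ n →
        owTraj f ζ c0 (blockStart Len s) (l + (jj : ℤ)) =
          if s / (n + 2) = 0 ∧ s % (n + 2) ≤ jj then c0 (l + (jj : ℤ)) else x (l + (jj : ℤ))) := by
    intro s
    induction s with
    | zero =>
        constructor
        · intro i hi
          simp [blockStart, owTraj]
        · intro jj h1 h2
          simp [blockStart, owTraj]
    | succ s ih =>
        obtain ⟨m, q, hq, rfl⟩ : ∃ m q, q < n + 2 ∧ s = m * (n + 2) + q :=
          ⟨s / (n + 2), s % (n + 2), Nat.mod_lt _ (by omega), by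
            conv_lhs => rw [← Nat.div_add_mod s (n + 2)]
            ring⟩
        have hmod := (md n m q hq).1
        have hdiv := (md n m q hq).2
        simp only [hmod, hdiv] at ih
        have hstep := hcs (m * (n + 2) + q)
        by_cases hq0 : q = 0
        · -- phase 1
          subst hq0
          have hA0 : A (m * (n + 2) + 0) = {i | i ≤ l} := by
            simp only [hAdef]; rw [hmod]; simp
          have hL0 : Len (m * (n + 2) + 0) =
              if m = 0 then K 0 else K m - K (m - 1) := by
            simp only [hLdef]; rw [hmod, hdiv]; simp
          have e1 : m * (n + 2) + 0 + 1 = m * (n + 2) + 1 := by omega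
          have hmod1 := (md n m 1 (by omega)).1
          have hdiv1 := (md n m 1 (by omega)).2
          rw [hA0, hL0, e1] at hstep
          constructor
          · intro i hi
            have ih1 : ∀ i' ≤ l, owTraj f ζ c0 (blockStart Len (m * (n + 2) + 0)) i' =
                (owStep f {i | i ≤ l})^[if m = 0 then 0 else K (m - 1)] c0 i' := by
              intro i' hi'
              have h := ih.1 i' hi'
              simpa using h
            have h2 := owStep_iterate_agree_iic f l ih1
              (if m = 0 then K 0 else K m - K (m - 1)) i hi
            simp only [e1, hmod1, hdiv1]
            rw [if_neg (by omega : ¬ (1:ℕ) = 0)]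
            have hcnt : (if m = 0 then K 0 else K m - K (m - 1)) +
                (if m = 0 then 0 else K (m - 1)) = K m := by
              by_cases hm : m = 0
              · simp [hm]
              · simp only [if_neg hm]
                have h3 := hKlt (m - 1)
                have h4 : m - 1 + 1 = m := by omega
                rw [h4] at h3
                omega
            rw [hstep, h2, ← Function.iterate_add_apply, hcnt]
          · intro jj h1 h2
            have hne : l + (jj : ℤ) ∉ {i : ℤ | i ≤ l} := by
              simp only [Set.mem_setOf_eq]
              have : (1:ℤ) ≤ (jj:ℤ) := by exact_mod_cast h1
              omega
            simp only [e1, hmod1, hdiv1]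
            rw [hstep, owStep_iterate_of_not_mem f _ hne]
            have h := ih.2 jj h1 h2
            simp only [Nat.zero_le, and_true] at h
            rw [h]
            by_cases hm : m = 0 <;> simp [hm, h1]
        · by_cases hqn : q ≤ n
          · -- phase 2
            have hA2 : A (m * (n + 2) + q) = {(l + (q : ℤ))} := by
              simp only [hAdef]; rw [hmod, if_neg hq0, if_pos hqn]
            have hL2 : Len (m * (n + 2) + q) =
                if m = 0 then (kp q).1 else (kp q).2 := by
              simp only [hLdef]; rw [hmod, hdiv, if_neg hq0, if_pos hqn]
            have e1 : m * (n + 2) + q + 1 = m * (n + 2) + (q + 1) := by omega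
            have hmod1 := (md n m (q + 1) (by omega)).1
            have hdiv1 := (md n m (q + 1) (by omega)).2
            rw [hA2, hL2, e1] at hstep
            have hnb : owTraj f ζ c0 (blockStart Len (m * (n + 2) + q)) (l + (q:ℤ) - 1)
                = x (l + (q:ℤ) - 1) := by
              rcases Nat.lt_or_ge q 2 with hq1 | hq2
              · have hq1' : q = 1 := by omega
                subst hq1'
                have h := ih.1 l le_rfl
                have he : l + ((1:ℕ):ℤ) - 1 = l := by push_cast; ring
                rw [he, h, if_neg hq0]
                exact hKmem m
              · have h := ih.2 (q - 1) (by omega) (by omega)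
                rw [if_neg (by omega : ¬ (m = 0 ∧ q ≤ q - 1))] at h
                have he : l + ((q - 1 : ℕ) : ℤ) = l + (q:ℤ) - 1 := by
                  push_cast [Nat.cast_sub (by omega : 1 ≤ q)]
                  ring
                rw [he] at h
                exact h
            constructor
            · intro i hi
              have hni : i ≠ l + (q:ℤ) := by
                have : (1:ℤ) ≤ (q:ℤ) := by exact_mod_cast (by omega : 1 ≤ q)
                omega
              simp only [e1, hmod1, hdiv1]
              rw [if_neg (by omega : ¬ q + 1 = 0)]
              rw [hstep, owStep_singleton_ne f _ _ _ hni]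
              have h := ih.1 i hi
              rw [if_neg hq0] at h
              exact h
            · intro jj h1 h2
              simp only [e1, hmod1, hdiv1]
              by_cases hjq : jj = q
              · subst hjq
                rw [if_neg (by omega : ¬ (m = 0 ∧ jj + 1 ≤ jj))]
                rw [hstep, owStep_singleton_iter, hnb]
                have hold := ih.2 jj h1 h2
                by_cases hm : m = 0
                · rw [if_pos ⟨hm, le_rfl⟩] at hold
                  rw [hold, if_pos hm]
                  exact (hkp jj h1 h2).2.2.1
                · rw [if_neg (fun hc => hm hc.1)] at hold
                  rw [hold, if_neg hm]
                  exact (hkp jj h1 h2).2.2.2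
              · have hni : l + (jj:ℤ) ≠ l + (q:ℤ) := by
                  intro hc
                  apply hjq
                  have h3 : (jj:ℤ) = (q:ℤ) := by omega
                  exact_mod_cast h3
                rw [hstep, owStep_singleton_ne f _ _ _ hni]
                have h := ih.2 jj h1 h2
                rw [h]
                have hcond : (m = 0 ∧ q + 1 ≤ jj) ↔ (m = 0 ∧ q ≤ jj) := by omega
                simp only [hcond]
          · -- phase 3
            have hqe : q = n + 1 := by omega
            subst hqe
            have hA3 : A (m * (n + 2) + (n + 1)) = {i | r ≤ i} := by
              simp only [hAdef]
              rw [hmod, if_neg (by omega : ¬ n + 1 = 0), if_neg (by omega : ¬ n + 1 ≤ n)]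
            have hL3 : Len (m * (n + 2) + (n + 1)) = 1 := by
              simp only [hLdef]
              rw [hmod, if_neg (by omega : ¬ n + 1 = 0), if_neg (by omega : ¬ n + 1 ≤ n)]
            have e1 : m * (n + 2) + (n + 1) + 1 = (m + 1) * (n + 2) + 0 := by ring
            have hmod1 := (md n (m + 1) 0 (by omega)).1
            have hdiv1 := (md n (m + 1) 0 (by omega)).2
            rw [hA3, hL3, e1] at hstep
            constructor
            · intro i hi
              simp only [e1, hmod1, hdiv1]
              rw [if_pos trivial, if_neg (by omega : ¬ m + 1 = 0)]
              have hni : i ∉ {i : ℤ | r ≤ i} := by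
                simp only [Set.mem_setOf_eq]; omega
              rw [hstep, owStep_iterate_of_not_mem f _ hni]
              have h := ih.1 i hi
              rw [if_neg (by omega : ¬ n + 1 = 0)] at h
              simp only [Nat.add_sub_cancel]
              exact h
            · intro jj h1 h2
              simp only [e1, hmod1, hdiv1]
              rw [if_neg (by omega : ¬ (m + 1 = 0 ∧ 0 ≤ jj))]
              have hni : l + (jj:ℤ) ∉ {i : ℤ | r ≤ i} := by
                simp only [Set.mem_setOf_eq]
                have : (jj:ℤ) ≤ (n:ℤ) := by exact_mod_cast h2
                omega
              rw [hstep, owStep_iterate_of_not_mem f _ hni]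
              have h := ih.2 jj h1 h2
              rw [if_neg (by omega : ¬ (m = 0 ∧ n + 1 ≤ jj))] at h
              exact h
  -- assemble the result
  have hBmono := blockStart_strictMono hLpos
  have hsegB : ∀ s, segIdx Len (blockStart Len s) = s := fun s =>
    segIdx_eq hLpos le_rfl (hBmono (Nat.lt_succ_self s))
  have hζB : ∀ s, ζ (blockStart Len s) = A s := by
    intro s
    show A (segIdx Len (blockStart Len s)) = A s
    rw [hsegB]
  have hlin : ∀ q : ℕ, StrictMono (fun m : ℕ => m * (n + 2) + q) := by
    intro q a b hab
    have h1 : a * (n + 2) < b * (n + 2) :=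
      mul_lt_mul_of_pos_right hab (by omega)
    show a * (n + 2) + q < b * (n + 2) + q
    omega
  refine ⟨ζ, ?_, fun m => blockStart Len (m * (n + 2) + (n + 1)), ?_, ?_⟩
  · -- fairness
    intro i
    rcases le_or_gt i l with hil | hil
    · refine Set.infinite_of_injective_forall_mem
        (f := fun m : ℕ => blockStart Len (m * (n + 2) + 0)) ?_ ?_
      · exact fun a b h => (hBmono.comp (hlin 0)).injective h
      · intro a
        show i ∈ ζ (blockStart Len (a * (n + 2) + 0))
        rw [hζB]
        have hm := (md n a 0 (by omega)).1
        simp only [hAdef]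
        rw [hm, if_pos rfl]
        exact hil
    · rcases lt_or_ge i r with hir | hir
      · obtain ⟨jj, hjj1, hjj2, hjje⟩ : ∃ jj : ℕ, 1 ≤ jj ∧ jj ≤ n ∧ (l + (jj:ℤ)) = i := by
          refine ⟨(i - l).toNat, ?_, ?_, ?_⟩ <;> omega
        refine Set.infinite_of_injective_forall_mem
          (f := fun m : ℕ => blockStart Len (m * (n + 2) + jj)) ?_ ?_
        · exact fun a b h => (hBmono.comp (hlin jj)).injective h
        · intro a
          show i ∈ ζ (blockStart Len (a * (n + 2) + jj))
          rw [hζB]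
          have hm := (md n a jj (by omega)).1
          simp only [hAdef]
          rw [hm, if_neg (by omega : ¬ jj = 0), if_pos hjj2]
          simp only [Set.mem_singleton_iff]
          omega
      · refine Set.infinite_of_injective_forall_mem
          (f := fun m : ℕ => blockStart Len (m * (n + 2) + (n + 1))) ?_ ?_
        · exact fun a b h => (hBmono.comp (hlin (n + 1))).injective h
        · intro a
          show i ∈ ζ (blockStart Len (a * (n + 2) + (n + 1)))
          rw [hζB]
          have hm := (md n a (n + 1) (by omega)).1
          simp only [hAdef]
          rw [hm, if_neg (by omega : ¬ n + 1 = 0), if_neg (by omega : ¬ n + 1 ≤ n)]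
          exact hir
  · -- T is strictly monotone
    intro a b hab
    exact hBmono (hlin (n + 1) hab)
  · -- restoration at round times
    intro m j hj1 hj2
    have h := inv (m * (n + 2) + (n + 1))
    have hmod := (md n m (n + 1) (by omega)).1
    have hdiv := (md n m (n + 1) (by omega)).2
    simp only [hmod, hdiv] at h
    rcases eq_or_lt_of_le hj1 with he | hlt
    · have h1 := h.1 l le_rfl
      rw [if_neg (by omega : ¬ n + 1 = 0)] at h1
      show owTraj f ζ c0 (blockStart Len (m * (n + 2) + (n + 1))) j = x j
      rw [← he, h1]
      exact hKmem m
    · obtain ⟨jj, hjj1, hjj2, hjje⟩ : ∃ jj : ℕ, 1 ≤ jj ∧ jj ≤ n ∧ (l + (jj:ℤ)) = j := by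
        refine ⟨(j - l).toNat, ?_, ?_, ?_⟩ <;> omega
      have h2 := h.2 jj hjj1 hjj2
      rw [if_neg (by omega : ¬ (m = 0 ∧ n + 1 ≤ jj))] at h2
      show owTraj f ζ c0 (blockStart Len (m * (n + 2) + (n + 1))) j = x j
      rw [← hjje]
      exact h2
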